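/- arXiv:2602.19191 — 2 statements merged into one kernel-verified Lean document; each statement's English description precedes it below -/
import Mathlib

section
/- Let w ∈ ℝ³, s_w = w_x + w_y + w_z, r_w = (w_y - w_z, w_z - w_x, w_x - w_y)ᵀ, and suppose r_w ≠ 0. For λ = i|w| or λ = -i|w|, define v = -|w|²(1,1,1)ᵀ + λ r_w + s_w w. Then w × v = λ v (cross product over ℂ³ with w viewed in ℂ³), i.e., v h(w) is an eigenvector of curl with eigenvalue iλ. -/
/-!
With `1` the all-ones vector, `r_w = w × 1`, `s_w = w ⬝ 1`, and the BAC-CAB rule gives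
`w × r_w = s_w w - |w|² 1`, while `w × w = 0`. Hence `w × v = -|w|² r_w + λ (s_w w - |w|² 1)`,
which is `λ v` exactly because `λ² = -|w|²`.
-/

open Complex

open Matrix in
theorem cross_smul_eq_of_sq_eq_neg_dotProduct_self {R : Type*} [CommRing R]
    (w : Fin 3 → R) {lam : R} (hlam : lam ^ 2 = -(w ⬝ᵥ w)) :
    w ⨯₃ (-(w ⬝ᵥ w) • 1 + lam • w ⨯₃ 1 + (w ⬝ᵥ 1) • w) =
      lam • (-(w ⬝ᵥ w) • 1 + lam • w ⨯₃ 1 + (w ⬝ᵥ 1) • w) := by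
  simp only [map_add, map_smul, cross_self, cross_cross_eq_smul_sub_smul', smul_zero,
    add_zero]
  linear_combination (norm := module) -hlam • (w ⨯₃ 1)

theorem stmt_3_general (w : Fin 3 → ℝ)
    (nw : ℝ) (hnw : nw = Real.sqrt (w 0 ^ 2 + w 1 ^ 2 + w 2 ^ 2))
    (lam : ℂ) (hlam : lam = Complex.I * nw ∨ lam = -(Complex.I * nw)) :
    let wc : Fin 3 → ℂ := fun j => (w j : ℂ)
    let rw : Fin 3 → ℂ := ![(w 1 : ℂ) - w 2, (w 2 : ℂ) - w 0, (w 0 : ℂ) - w 1]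
    let sw : ℂ := (w 0 : ℂ) + w 1 + w 2
    let v : Fin 3 → ℂ := fun j => -(nw : ℂ) ^ 2 + lam * rw j + sw * wc j
    crossProduct wc v = lam • v := by
  intro wc rw sw v
  have hnw_sq : (nw : ℂ) ^ 2 = wc ⬝ᵥ wc := by
    rw [hnw, ← ofReal_pow, Real.sq_sqrt (by positivity)]
    simp [wc, dotProduct, Fin.sum_univ_three, sq]
  have hlam_sq : lam ^ 2 = -(wc ⬝ᵥ wc) := by
    rcases hlam with rfl | rfl <;> linear_combination (-1 : ℂ) * hnw_sq + nw ^ 2 * I_sq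
  have hrw : rw = crossProduct wc 1 := by
    ext j
    fin_cases j <;> simp [rw, wc, cross_apply]
  have hsw : sw = wc ⬝ᵥ 1 := by
    simp [sw, wc, dotProduct, Fin.sum_univ_three]
  have hv : v = -(wc ⬝ᵥ wc) • 1 + lam • crossProduct wc 1 + (wc ⬝ᵥ 1) • wc := by
    ext j
    simp [v, hrw, hsw, hnw_sq]
  rw [hv]
  exact cross_smul_eq_of_sq_eq_neg_dotProduct_self wc hlam_sq

theorem stmt_3 (w : Fin 3 → ℝ)
    (hr : ![w 1 - w 2, w 2 - w 0, w 0 - w 1] ≠ (0 : Fin 3 → ℝ))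
    (nw : ℝ) (hnw : nw = Real.sqrt (w 0 ^ 2 + w 1 ^ 2 + w 2 ^ 2))
    (lam : ℂ) (hlam : lam = Complex.I * nw ∨ lam = -(Complex.I * nw)) :
    let wc : Fin 3 → ℂ := fun j => (w j : ℂ)
    let rw : Fin 3 → ℂ := ![(w 1 : ℂ) - w 2, (w 2 : ℂ) - w 0, (w 0 : ℂ) - w 1]
    let sw : ℂ := (w 0 : ℂ) + w 1 + w 2
    let v : Fin 3 → ℂ := fun j => -(nw : ℂ) ^ 2 + lam * rw j + sw * wc j
    crossProduct wc v = lam • v :=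
  stmt_3_general w nw hnw lam hlam
end

section
/- Let w ∈ ℝ³ with r_w ≠ 0, and for a ∈ ℂ³ define α_1 = (w·a)/|w|, α_2 and α_3 by formula (when s_w = 0): α_2 = -s_a/(2γ_w²) - i(a·r_w)/(2|w|γ_w²), α_3 = -s_a/(2γ_w²) + i(a·r_w)/(2|w|γ_w²), where s_a = a_x+a_y+a_z and γ_w = |r_w|. Then with v_1 = w/|w| and v_d = -|w|²(1,1,1)ᵀ + λ_d r_w + s_w w for λ_2 = i|w|, λ_3 = -i|w|, we have a = α_1 v_1 + α_2 v_2 + α_3 v_3. -/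
/-!
When `s_w = 0`, the vectors `w`, `𝟙 = (1,1,1)` and `r_w = w × 𝟙` are pairwise orthogonal, with
`|𝟙|² = 3` and `γ_w² = |r_w|² = 3|w|²`. Hence `a` is the sum of its orthogonal projections
`(w·a)/|w|² w + s_a/3 𝟙 + (a·r_w)/γ_w² r_w`, and since `v₂ + v₃ = -2|w|² 𝟙` and
`v₂ - v₃ = 2i|w| r_w`, the last two projections are exactly `α₂ v₂ + α₃ v₃`.
-/

open Matrix

theorem cross_dot_cross_self_smul {R : Type*} [CommRing R] (w u a : Fin 3 → R) :
    (w ⨯₃ u ⬝ᵥ w ⨯₃ u) • a = (a ⬝ᵥ w ⨯₃ u) • w ⨯₃ u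
      + ((a ⬝ᵥ w) * (u ⬝ᵥ u) - (a ⬝ᵥ u) * (w ⬝ᵥ u)) • w
      + ((a ⬝ᵥ u) * (w ⬝ᵥ w) - (a ⬝ᵥ w) * (w ⬝ᵥ u)) • u := by
  ext i
  simp only [Pi.add_apply, Pi.smul_apply, smul_eq_mul, dotProduct, Fin.sum_univ_three]
  fin_cases i <;>
  · simp [cross_apply]
    ring

theorem dot_self_mul_dot_self_smul_of_dot_eq_zero {R : Type*} [CommRing R] {w u : Fin 3 → R}
    (h : w ⬝ᵥ u = 0) (a : Fin 3 → R) :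
    ((w ⬝ᵥ w) * (u ⬝ᵥ u)) • a = ((a ⬝ᵥ w) * (u ⬝ᵥ u)) • w + ((a ⬝ᵥ u) * (w ⬝ᵥ w)) • u
      + (a ⬝ᵥ w ⨯₃ u) • w ⨯₃ u := by
  have expansion := cross_dot_cross_self_smul w u a
  simp only [cross_dot_cross, h, mul_zero, zero_mul, sub_zero] at expansion
  rw [expansion]
  abel

open Complex

theorem stmt_8_general (w : Fin 3 → ℝ) (a : Fin 3 → ℂ)
    (hsw : w 0 + w 1 + w 2 = 0) :
    let nw : ℝ := Real.sqrt (w 0 ^ 2 + w 1 ^ 2 + w 2 ^ 2)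
    let γ : ℝ := Real.sqrt ((w 1 - w 2) ^ 2 + (w 2 - w 0) ^ 2 + (w 0 - w 1) ^ 2)
    let rw : Fin 3 → ℂ := ![(w 1 : ℂ) - w 2, (w 2 : ℂ) - w 0, (w 0 : ℂ) - w 1]
    let sw : ℂ := (w 0 : ℂ) + w 1 + w 2
    let sa : ℂ := a 0 + a 1 + a 2
    let wa : ℂ := (w 0 : ℂ) * a 0 + (w 1 : ℂ) * a 1 + (w 2 : ℂ) * a 2
    let ar : ℂ := a 0 * rw 0 + a 1 * rw 1 + a 2 * rw 2
    let α₁ : ℂ := wa / nw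
    let α₂ : ℂ := -sa / (2 * γ ^ 2) - Complex.I * ar / (2 * nw * γ ^ 2)
    let α₃ : ℂ := -sa / (2 * γ ^ 2) + Complex.I * ar / (2 * nw * γ ^ 2)
    let v₁ : Fin 3 → ℂ := fun j => (w j : ℂ) / nw
    let v₂ : Fin 3 → ℂ := fun j => -(nw : ℂ) ^ 2 + Complex.I * nw * rw j + sw * (w j : ℂ)
    let v₃ : Fin 3 → ℂ := fun j => -(nw : ℂ) ^ 2 - Complex.I * nw * rw j + sw * (w j : ℂ)
    0 < nw →
    a = α₁ • v₁ + α₂ • v₂ + α₃ • v₃ := by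
  intro nw γ rw sw sa wa ar α₁ α₂ α₃ v₁ v₂ v₃ hnw
  set wc : Fin 3 → ℂ := fun j => (w j : ℂ)
  have hsw_zero : sw = 0 := by simp only [sw]; exact_mod_cast hsw
  have horth : wc ⬝ᵥ 1 = 0 := by simpa [wc, dotProduct, Fin.sum_univ_three] using hsw_zero
  have hnw_sq : (nw : ℂ) ^ 2 = wc ⬝ᵥ wc := by
    rw [← ofReal_pow, Real.sq_sqrt (by positivity)]
    simp [wc, dotProduct, Fin.sum_univ_three, sq]
  have hγ_sq : (γ : ℂ) ^ 2 = 3 * nw ^ 2 := by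
    rw [← ofReal_pow, ← ofReal_pow, Real.sq_sqrt (by positivity), Real.sq_sqrt (by positivity)]
    push_cast
    linear_combination (-(w 0 + w 1 + w 2 : ℂ)) * hsw_zero
  have hcross : wc ⨯₃ 1 = rw := by
    ext j; fin_cases j <;> simp [wc, rw, cross_apply]
  have hwa : a ⬝ᵥ wc = wa := by simp [dotProduct, Fin.sum_univ_three, wa, wc, mul_comm]
  have hsa : a ⬝ᵥ 1 = sa := by simp [dotProduct, Fin.sum_univ_three, sa]
  have har : a ⬝ᵥ rw = ar := by simp [dotProduct, Fin.sum_univ_three, ar]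
  have hone : (1 : Fin 3 → ℂ) ⬝ᵥ 1 = 3 := by simp [dotProduct]
  have expansion := dot_self_mul_dot_self_smul_of_dot_eq_zero horth a
  rw [hcross, ← hnw_sq, hwa, hsa, har, hone] at expansion
  have hnw_ne : (nw : ℂ) ≠ 0 := by exact_mod_cast hnw.ne'
  funext j
  have hj := congrFun expansion j
  simp only [Pi.add_apply, Pi.smul_apply, smul_eq_mul, Pi.one_apply, mul_one, wc] at hj
  simp only [Pi.add_apply, Pi.smul_apply, smul_eq_mul, α₁, α₂, α₃, v₁, v₂, v₃, hsw_zero, zero_mul,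
    add_zero, hγ_sq]
  field_simp
  linear_combination 2 * hj + (2 * ar * rw j) * I_sq

theorem stmt_8 (w : Fin 3 → ℝ) (a : Fin 3 → ℂ)
    (hr : ![w 1 - w 2, w 2 - w 0, w 0 - w 1] ≠ (0 : Fin 3 → ℝ))
    (hsw : w 0 + w 1 + w 2 = 0) :
    let nw : ℝ := Real.sqrt (w 0 ^ 2 + w 1 ^ 2 + w 2 ^ 2)
    let γ : ℝ := Real.sqrt ((w 1 - w 2) ^ 2 + (w 2 - w 0) ^ 2 + (w 0 - w 1) ^ 2)
    let rw : Fin 3 → ℂ := ![(w 1 : ℂ) - w 2, (w 2 : ℂ) - w 0, (w 0 : ℂ) - w 1]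
    let sw : ℂ := (w 0 : ℂ) + w 1 + w 2
    let sa : ℂ := a 0 + a 1 + a 2
    let wa : ℂ := (w 0 : ℂ) * a 0 + (w 1 : ℂ) * a 1 + (w 2 : ℂ) * a 2
    let ar : ℂ := a 0 * rw 0 + a 1 * rw 1 + a 2 * rw 2
    let α₁ : ℂ := wa / nw
    let α₂ : ℂ := -sa / (2 * γ ^ 2) - Complex.I * ar / (2 * nw * γ ^ 2)
    let α₃ : ℂ := -sa / (2 * γ ^ 2) + Complex.I * ar / (2 * nw * γ ^ 2)
    let v₁ : Fin 3 → ℂ := fun j => (w j : ℂ) / nw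
    let v₂ : Fin 3 → ℂ := fun j => -(nw : ℂ) ^ 2 + Complex.I * nw * rw j + sw * (w j : ℂ)
    let v₃ : Fin 3 → ℂ := fun j => -(nw : ℂ) ^ 2 - Complex.I * nw * rw j + sw * (w j : ℂ)
    0 < nw →
    a = α₁ • v₁ + α₂ • v₂ + α₃ • v₃ :=
  stmt_8_general w a hsw
end
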